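/- arXiv:2001.11700 — 2 statements merged into one kernel-verified Lean document; each statement's English description precedes it below -/
import Mathlib

section
/- Let s < n be positive integers and let S₁, S₂ be positive definite symmetric s×s matrices over ℤ. Then S₁ and S₂ are equivalent under GL(s,ℤ) (i.e. there exists U ∈ GL(s,ℤ) with UᵀS₁U = S₂) if and only if the n×n block matrices diag(S₁, 0) and diag(S₂, 0) (with zero blocks completing to size n) are equivalent under GL(n,ℤ). -/
/-!
Write `V = [[A, B], [C, D]]`. Then `Vᵀ diag(S, 0) V = [[AᵀSA, AᵀSB], [BᵀSA, BᵀSB]]`, so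
`Vᵀ diag(S₁, 0) V = diag(S₂, 0)` gives `AᵀS₁A = S₂` and `BᵀS₁B = 0`. The diagonal entries of
`BᵀS₁B` are the values of the quadratic form of `S₁` on the columns of `B`, so positive
definiteness forces `B = 0`. Then `V` is block lower triangular, `det V = det A * det D`, and `A`
is unimodular. Conversely `diag(U, 1)` lifts a `GL(s, ℤ)`-equivalence.
-/

open Matrix

namespace Matrix

variable {l m n o R : Type*}

theorem fromBlocks_transpose_mul_fromBlocks_zero_mul [Fintype l] [Fintype n] [Semiring R]
    (S : Matrix l l R) (A : Matrix l m R) (B : Matrix l o R) (C : Matrix n m R)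
    (D : Matrix n o R) :
    (fromBlocks A B C D)ᵀ * fromBlocks S 0 0 (0 : Matrix n n R) * fromBlocks A B C D =
      fromBlocks (Aᵀ * S * A) (Aᵀ * S * B) (Bᵀ * S * A) (Bᵀ * S * B) := by
  simp [fromBlocks_transpose, fromBlocks_multiply]

theorem transpose_mul_mul_self_apply_diag [Fintype l] [CommSemiring R] (S : Matrix l l R)
    (B : Matrix l m R) (j : m) : (Bᵀ * S * B) j j = Bᵀ j ⬝ᵥ S *ᵥ Bᵀ j := by
  rw [Matrix.mul_assoc, mul_apply']
  rfl

theorem eq_zero_of_transpose_mul_mul_self_eq_zero [Fintype l] [CommSemiring R] [Preorder R]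
    {S : Matrix l l R} (hS : ∀ x : l → R, x ≠ 0 → 0 < x ⬝ᵥ S *ᵥ x) {B : Matrix l m R}
    (hB : Bᵀ * S * B = 0) : B = 0 := by
  rw [← transpose_eq_zero]
  ext j i
  by_contra hji
  have hpos := hS (Bᵀ j) fun h => hji (congrFun h i)
  rw [← transpose_mul_mul_self_apply_diag, hB] at hpos
  exact lt_irrefl _ hpos

end Matrix

theorem stmt_0_general (s n : ℕ)
    (S₁ S₂ : Matrix (Fin s) (Fin s) ℤ)
    (hp₁ : ∀ x : Fin s → ℤ, x ≠ 0 → 0 < x ⬝ᵥ S₁ *ᵥ x) :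
    (∃ U : Matrix (Fin s) (Fin s) ℤ, IsUnit U.det ∧ Uᵀ * S₁ * U = S₂) ↔
    (∃ V : Matrix (Fin s ⊕ Fin (n - s)) (Fin s ⊕ Fin (n - s)) ℤ, IsUnit V.det ∧
      Vᵀ * Matrix.fromBlocks S₁ 0 0 0 * V = Matrix.fromBlocks S₂ 0 0 0) := by
  constructor
  · rintro ⟨U, hU, rfl⟩
    refine ⟨fromBlocks U 0 0 1, by simpa [det_fromBlocks_zero₁₂] using hU, ?_⟩
    simp [fromBlocks_transpose_mul_fromBlocks_zero_mul]
  · rintro ⟨V, hV, hVS⟩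
    rw [← fromBlocks_toBlocks V, fromBlocks_transpose_mul_fromBlocks_zero_mul,
      fromBlocks_inj] at hVS
    obtain ⟨hA, -, -, hB⟩ := hVS
    have hB0 : V.toBlocks₁₂ = 0 := eq_zero_of_transpose_mul_mul_self_eq_zero hp₁ hB
    rw [← fromBlocks_toBlocks V, hB0, det_fromBlocks_zero₁₂] at hV
    exact ⟨V.toBlocks₁₁, isUnit_of_mul_isUnit_left hV, hA⟩

/-- For positive integers `s < n` and positive definite symmetric
integer matrices `S₁ S₂` of size `s`, `S₁` and `S₂` are `GL(s,ℤ)`-equivalent iff the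
`n × n` block matrices `diag(S₁,0)` and `diag(S₂,0)` are `GL(n,ℤ)`-equivalent.
(The `n × n` matrices are indexed by `Fin s ⊕ Fin (n - s)`.) -/
theorem stmt_0 (s n : ℕ) (hs : 0 < s) (hsn : s < n)
    (S₁ S₂ : Matrix (Fin s) (Fin s) ℤ)
    (hS₁ : S₁.IsSymm) (hS₂ : S₂.IsSymm)
    (hp₁ : ∀ x : Fin s → ℤ, x ≠ 0 → 0 < x ⬝ᵥ S₁ *ᵥ x)
    (hp₂ : ∀ x : Fin s → ℤ, x ≠ 0 → 0 < x ⬝ᵥ S₂ *ᵥ x) :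
    (∃ U : Matrix (Fin s) (Fin s) ℤ, IsUnit U.det ∧ Uᵀ * S₁ * U = S₂) ↔
    (∃ V : Matrix (Fin s ⊕ Fin (n - s)) (Fin s ⊕ Fin (n - s)) ℤ, IsUnit V.det ∧
      Vᵀ * Matrix.fromBlocks S₁ 0 0 0 * V = Matrix.fromBlocks S₂ 0 0 0) :=
  stmt_0_general s n S₁ S₂ hp₁
end

section
/- Let S be a symmetric positive definite (n−1)×(n−1) half-integral matrix with content c(S), let r ∈ ℕ, μ ∈ ℤ^{n−1}, and L ∈ ℤ^{n−1}. Then gcd(r, gcd(μ), c(S)) = gcd(r + Lᵀμ + S[L], gcd(μ + 2SL), c(S)), where S[L] = LᵀSL and gcd(v) of a vector means the gcd of its entries. -/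
open Matrix

/-- A symmetric rational matrix is half-integral if its diagonal entries are
integers and its doubled off-diagonal entries are integers. -/
def IsHalfIntegral {n : ℕ} (T : Matrix (Fin n) (Fin n) ℚ) : Prop :=
  T.IsSymm ∧ (∀ i, (T i i).den = 1) ∧ (∀ i j, ((2 : ℚ) * T i j).den = 1)

/-- The content of a half-integral matrix: the gcd of all diagonal entries and
all doubled off-diagonal entries (read off via numerators). -/
def content {n : ℕ} (T : Matrix (Fin n) (Fin n) ℚ) : ℤ :=
  Finset.gcd Finset.univ fun p : Fin n × Fin n =>
    if p.1 = p.2 then (T p.1 p.1).num else ((2 : ℚ) * T p.1 p.2).num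

/-!
Let `d ∣ c(S)`. On integral vectors the quadratic form `x ↦ S[x]` takes values in `d ℤ`:
polarization writes `S[∑ xᵢ eᵢ]` through the values `S[eᵢ] = Sᵢᵢ` and the polar values
`xᵢ xⱼ (2 Sᵢⱼ)`, all of which lie in `d ℤ`; likewise every entry of `2 S x` does. Hence `d`
divides `S[L]` and `2 S L`, so `d` divides `r` and all `μᵢ` exactly when it divides the shifted
`r + Lᵀμ + S[L]` and `μ + 2 S L`. The two gcds have the same divisors and are therefore equal.
-/

open AddSubgroup

lemma Int.cast_mem_zmultiples_cast_iff {R : Type*} [CommRing R] [CharZero R] {d n : ℤ} :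
    (n : R) ∈ zmultiples (d : R) ↔ d ∣ n := by
  simp only [AddSubgroup.mem_zmultiples_iff, zsmul_eq_mul]
  constructor
  · rintro ⟨k, hk⟩
    exact ⟨k, Int.cast_injective (α := R) (by rw [← hk, Int.cast_mul, mul_comm])⟩
  · rintro ⟨k, rfl⟩
    exact ⟨k, by push_cast; ring⟩

lemma intCast_mul_mem_zmultiples {R : Type*} [Ring R] {q d : R} (k : ℤ)
    (h : q ∈ zmultiples d) : (k : R) * q ∈ zmultiples d :=
  zsmul_eq_mul q k ▸ zsmul_mem h k

lemma content_dvd {n : ℕ} (T : Matrix (Fin n) (Fin n) ℚ) (i j : Fin n) :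
    content T ∣ if i = j then (T i i).num else ((2 : ℚ) * T i j).num :=
  Finset.gcd_dvd (f := fun p : Fin n × Fin n =>
    if p.1 = p.2 then (T p.1 p.1).num else ((2 : ℚ) * T p.1 p.2).num) (Finset.mem_univ (i, j))

namespace IsHalfIntegral

variable {m : ℕ} {S : Matrix (Fin m) (Fin m) ℚ} {d : ℤ}

lemma diag_mem_zmultiples (hS : IsHalfIntegral S) (hd : d ∣ content S) (i : Fin m) :
    S i i ∈ zmultiples (d : ℚ) := by
  rw [← Rat.coe_int_num_of_den_eq_one (hS.2.1 i), Int.cast_mem_zmultiples_cast_iff]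
  simpa using hd.trans (content_dvd S i i)

lemma two_mul_mem_zmultiples (hS : IsHalfIntegral S) (hd : d ∣ content S) (i j : Fin m) :
    2 * S i j ∈ zmultiples (d : ℚ) := by
  obtain rfl | hij := eq_or_ne i j
  · rw [two_mul]
    exact add_mem (hS.diag_mem_zmultiples hd i) (hS.diag_mem_zmultiples hd i)
  rw [← Rat.coe_int_num_of_den_eq_one (hS.2.2 i j), Int.cast_mem_zmultiples_cast_iff]
  simpa [hij] using hd.trans (content_dvd S i j)

lemma two_mul_mulVec_mem_zmultiples (hS : IsHalfIntegral S) (hd : d ∣ content S)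
    (x : Fin m → ℤ) (i : Fin m) :
    2 * (S *ᵥ fun j => (x j : ℚ)) i ∈ zmultiples (d : ℚ) := by
  simp only [mulVec, dotProduct, Finset.mul_sum]
  refine sum_mem fun j _ => ?_
  rw [← mul_assoc, mul_comm]
  exact intCast_mul_mem_zmultiples (x j) (hS.two_mul_mem_zmultiples hd i j)

lemma dotProduct_mulVec_mem_zmultiples (hS : IsHalfIntegral S) (hd : d ∣ content S)
    (x : Fin m → ℤ) :
    (fun i => (x i : ℚ)) ⬝ᵥ S *ᵥ (fun i => (x i : ℚ)) ∈ zmultiples (d : ℚ) := by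
  let Q := LinearMap.BilinMap.toQuadraticMap (toLinearMap₂' ℚ (S₁ := ℚ) (S₂ := ℚ) S)
  have hQ : ∀ y, Q y = y ⬝ᵥ S *ᵥ y := fun y => toLinearMap₂'_apply' S y y
  rw [← hQ, ← Finset.univ_sum_single fun i => (x i : ℚ), Q.map_sum']
  refine sub_mem (sum_mem fun ij _ => ?_) (sum_mem fun i _ => ?_)
  · induction ij using Sym2.ind with
    | _ i j =>
      rw [Sym2.map_mk, QuadraticMap.polarSym2_sym2Mk, LinearMap.BilinMap.polar_toQuadraticMap]
      convert intCast_mul_mem_zmultiples (x i * x j) (hS.two_mul_mem_zmultiples hd i j) using 1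
      simp only [toLinearMap₂'_apply', mulVec_single, MulOpposite.op_intCast, dotProduct_smul,
        single_dotProduct, col_apply, MulOpposite.smul_eq_mul_unop, MulOpposite.unop_intCast,
        hS.1.apply, Int.cast_mul]
      ring
  · convert intCast_mul_mem_zmultiples (x i * x i) (hS.diag_mem_zmultiples hd i) using 1
    simp only [hQ, mulVec_single, MulOpposite.op_intCast, dotProduct_smul, single_dotProduct,
      col_apply, MulOpposite.smul_eq_mul_unop, MulOpposite.unop_intCast, Int.cast_mul]
    ring

lemma dvd_shift_iff (hS : IsHalfIntegral S) (hd : d ∣ content S) {r : ℤ} {μ L : Fin m → ℤ}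
    {sL : ℤ} (hsL : (sL : ℚ) = (fun i => (L i : ℚ)) ⬝ᵥ S *ᵥ (fun i => (L i : ℚ)))
    {v : Fin m → ℤ} (hv : ∀ i, (v i : ℚ) = 2 * (S *ᵥ (fun j => (L j : ℚ))) i) :
    (d ∣ r ∧ ∀ i, d ∣ μ i) ↔ (d ∣ r + ∑ i, L i * μ i + sL ∧ ∀ i, d ∣ μ i + v i) := by
  have hdsL : d ∣ sL :=
    Int.cast_mem_zmultiples_cast_iff.1 (hsL ▸ hS.dotProduct_mulVec_mem_zmultiples hd L)
  have hdv : ∀ i, d ∣ v i := fun i =>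
    Int.cast_mem_zmultiples_cast_iff.1 ((hv i).symm ▸ hS.two_mul_mulVec_mem_zmultiples hd L i)
  have hμ : (∀ i, d ∣ μ i) ↔ ∀ i, d ∣ μ i + v i :=
    forall_congr' fun i => (dvd_add_left (hdv i)).symm
  rw [← hμ]
  refine and_congr_left fun hdμ => ?_
  have hLμ : d ∣ ∑ i, L i * μ i := Finset.dvd_sum fun i _ => (hdμ i).mul_left _
  rw [dvd_add_left hdsL, dvd_add_left hLμ]

end IsHalfIntegral

theorem stmt_14_general (m : ℕ) (S : Matrix (Fin m) (Fin m) ℚ) (hS : IsHalfIntegral S)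
    (r : ℕ) (μ L : Fin m → ℤ)
    (sL : ℤ) (hsL : (sL : ℚ) = (fun i => (L i : ℚ)) ⬝ᵥ S *ᵥ (fun i => (L i : ℚ)))
    (v : Fin m → ℤ) (hv : ∀ i, (v i : ℚ) = 2 * (S *ᵥ (fun j => (L j : ℚ))) i) :
    gcd (r : ℤ) (gcd (Finset.gcd Finset.univ μ) (content S)) =
      gcd ((r : ℤ) + (∑ i, L i * μ i) + sL)
        (gcd (Finset.gcd Finset.univ fun i => μ i + v i) (content S)) := by
  have same_divisors : ∀ d : ℤ, d ∣ gcd (r : ℤ) (gcd (Finset.gcd Finset.univ μ) (content S)) ↔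
      d ∣ gcd ((r : ℤ) + (∑ i, L i * μ i) + sL)
        (gcd (Finset.gcd Finset.univ fun i => μ i + v i) (content S)) := fun d => by
    simp only [dvd_gcd_iff, Finset.dvd_gcd_iff, Finset.mem_univ, true_imp_iff, ← and_assoc]
    exact and_congr_left fun hd => hS.dvd_shift_iff hd hsL hv
  exact dvd_antisymm_of_normalize_eq (normalize_gcd _ _) (normalize_gcd _ _)
    ((same_divisors _).1 dvd_rfl) ((same_divisors _).2 dvd_rfl)

/-- Invariance of `gcd(r, gcd(μ), c(S))` under the Jacobi index shift
`(r, μ) ↦ (r + Lᵀμ + S[L], μ + 2SL)`, for `S` positive definite half-integral.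
Here `sL` is the integer equal to `S[L] = LᵀSL` and `v` the integer vector equal to
`2SL`. -/
theorem stmt_14 (m : ℕ) (S : Matrix (Fin m) (Fin m) ℚ) (hS : IsHalfIntegral S)
    (hpos : ∀ x : Fin m → ℚ, x ≠ 0 → 0 < x ⬝ᵥ S *ᵥ x)
    (r : ℕ) (μ L : Fin m → ℤ)
    (sL : ℤ) (hsL : (sL : ℚ) = (fun i => (L i : ℚ)) ⬝ᵥ S *ᵥ (fun i => (L i : ℚ)))
    (v : Fin m → ℤ) (hv : ∀ i, (v i : ℚ) = 2 * (S *ᵥ (fun j => (L j : ℚ))) i) :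
    gcd (r : ℤ) (gcd (Finset.gcd Finset.univ μ) (content S)) =
      gcd ((r : ℤ) + (∑ i, L i * μ i) + sL)
        (gcd (Finset.gcd Finset.univ fun i => μ i + v i) (content S)) :=
  stmt_14_general m S hS r μ L sL hsL v hv
end
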